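/- Work in dimension 4 with Minkowski metric η = diag(1,−1,−1,−1). Let f be structure constants, γ, ρ : ℝ⁴ → Mat_4(ℝ) smooth, A : ℝ⁴ → ℝ⁴ smooth, and F : ℝ⁴ → Mat_4(ℝ) smooth with F_{ab} = −F_{ba}. Assume that for every smooth ψ : ℝ⁴ → ℝ and all a,b: (D_a D_b ψ) − (D_b D_a ψ) = {F_{ab}, ψ} + Σ_{d,e} F_{ad} f^{de}_b (D_e ψ) − Σ_{d,e} F_{bd} f^{de}_a (D_e ψ). If the natural equations of motion hold, i.e. Σ_b (D_b F^{ba})(x) = 0 for all x and all a, then Σ_{a,b,d,e} F_{ad}(x) f^{de}_b (D_e F^{ab})(x) = 0 for all x. -/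

import Mathlib

set_option autoImplicit false

open scoped BigOperators

/-- Partial derivative `∂_a u (x)` of `u : ℝ⁴ → ℝ`. -/
noncomputable def pd (a : Fin 4) (u : (Fin 4 → ℝ) → ℝ) (x : Fin 4 → ℝ) : ℝ :=
  fderiv ℝ u x (Pi.single a 1)

/-- Lie-Poisson bracket `{u,v}(x) = Σ_{a,b,c} f^{ab}_c x^c ∂_a u ∂_b v`. -/
noncomputable def pb (f : Fin 4 → Fin 4 → Fin 4 → ℝ)
    (u v : (Fin 4 → ℝ) → ℝ) (x : Fin 4 → ℝ) : ℝ :=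
  ∑ a, ∑ b, ∑ c, f a b c * x c * pd a u x * pd b v x

/-- Covariant derivative `(D_a ψ)(x) = Σ_m ρ^m_a(A(x)) (Σ_l γ^l_m(A(x)) ∂_l ψ(x) + {A_m, ψ}(x))`. -/
noncomputable def Dcov (f : Fin 4 → Fin 4 → Fin 4 → ℝ)
    (γ ρ : (Fin 4 → ℝ) → Matrix (Fin 4) (Fin 4) ℝ)
    (A : (Fin 4 → ℝ) → Fin 4 → ℝ) (a : Fin 4)
    (ψ : (Fin 4 → ℝ) → ℝ) (x : Fin 4 → ℝ) : ℝ :=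
  ∑ m, ρ (A x) m a * ((∑ l, γ (A x) l m * pd l ψ x) + pb f (fun y => A y m) ψ x)

/-- The Minkowski metric `η = diag(1,−1,−1,−1)`. -/
noncomputable def ηm : Matrix (Fin 4) (Fin 4) ℝ := Matrix.diagonal ![1, -1, -1, -1]

/-- Indices raised with `η`: `F^{ab}(x) = Σ_{c,e} η^{ac} η^{be} F_{ce}(x)`. -/
noncomputable def Fup (F : (Fin 4 → ℝ) → Matrix (Fin 4) (Fin 4) ℝ)
    (a b : Fin 4) (x : Fin 4 → ℝ) : ℝ :=
  ∑ c, ∑ e, ηm a c * ηm b e * F x c e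

/-- The covariant equations-of-motion expression `E_C^a(x)`. -/
noncomputable def EC (f : Fin 4 → Fin 4 → Fin 4 → ℝ)
    (γ ρ : (Fin 4 → ℝ) → Matrix (Fin 4) (Fin 4) ℝ)
    (A : (Fin 4 → ℝ) → Fin 4 → ℝ)
    (F : (Fin 4 → ℝ) → Matrix (Fin 4) (Fin 4) ℝ)
    (a : Fin 4) (x : Fin 4 → ℝ) : ℝ :=
  (∑ c, Dcov f γ ρ A c (fun y => Fup F c a y) x)
  + (1/2) * (∑ d, ∑ e, ∑ b, F x d e * f d e b * Fup F a b x)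
  - ∑ d, ∑ e, ∑ b, F x d e * f a e b * Fup F d b x

/-- Structure constants: antisymmetry and Jacobi identity. -/
def IsStructureConstants (f : Fin 4 → Fin 4 → Fin 4 → ℝ) : Prop :=
  (∀ a b c, f a b c = - f b a c) ∧
  (∀ i j k a, ∑ l, (f k l i * f j a l + f j l i * f a k l + f a l i * f k j l) = 0)

section AuxLemmas

lemma pd_neg' (ψ : (Fin 4 → ℝ) → ℝ) (l : Fin 4) (x : Fin 4 → ℝ) :
    pd l (fun y => -ψ y) x = -pd l ψ x := by
  simp [pd, fderiv_neg]

lemma pd_zero' (l : Fin 4) (x : Fin 4 → ℝ) : pd l (fun _ => (0:ℝ)) x = 0 := by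
  simp [pd]

lemma pd_const_mul' (c : ℝ) (ψ : (Fin 4 → ℝ) → ℝ) (l : Fin 4) (x : Fin 4 → ℝ)
    (h : DifferentiableAt ℝ ψ x) :
    pd l (fun y => c * ψ y) x = c * pd l ψ x := by
  simp [pd, fderiv_const_mul h]

lemma pd_sum' (h : Fin 4 → (Fin 4 → ℝ) → ℝ) (l : Fin 4) (x : Fin 4 → ℝ)
    (hd : ∀ i, DifferentiableAt ℝ (h i) x) :
    pd l (fun y => ∑ i, h i y) x = ∑ i, pd l (h i) x := by
  simp [pd, fderiv_fun_sum (fun i _ => hd i)]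

lemma contDiff_pd' (l : Fin 4) (ψ : (Fin 4 → ℝ) → ℝ) (hψ : ContDiff ℝ (⊤ : ℕ∞) ψ) :
    ContDiff ℝ (⊤ : ℕ∞) (pd l ψ) :=
  (hψ.fderiv_right (by simp)).clm_apply contDiff_const

lemma sum_comm4' {M : Type*} [AddCommMonoid M] (t : Fin 4 → Fin 4 → Fin 4 → Fin 4 → M) :
    ∑ a, ∑ b, ∑ c, ∑ i, t a b c i = ∑ i, ∑ a, ∑ b, ∑ c, t a b c i := by
  refine (Finset.sum_congr rfl fun a _ => Finset.sum_congr rfl fun b _ => Finset.sum_comm).trans ?_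
  refine (Finset.sum_congr rfl fun a _ => Finset.sum_comm).trans ?_
  exact Finset.sum_comm

lemma sum_antisym' (t : Fin 4 → Fin 4 → ℝ) (h : ∀ a b, t a b = - t b a) :
    ∑ a, ∑ b, t a b = 0 := by
  have h2 : ∑ a, ∑ b, t a b = - ∑ a, ∑ b, t a b := by
    calc ∑ a, ∑ b, t a b = ∑ b, ∑ a, t a b := Finset.sum_comm
    _ = ∑ b, ∑ a, -(t b a) := by
        exact Finset.sum_congr rfl fun b _ => Finset.sum_congr rfl fun a _ => h a b
    _ = - ∑ b, ∑ a, t b a := by simp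
  linarith

variable (f : Fin 4 → Fin 4 → Fin 4 → ℝ)
variable (γ ρ : (Fin 4 → ℝ) → Matrix (Fin 4) (Fin 4) ℝ)
variable (A : (Fin 4 → ℝ) → Fin 4 → ℝ)

lemma pb_neg' (u ψ : (Fin 4 → ℝ) → ℝ) (x : Fin 4 → ℝ) :
    pb f u (fun y => -ψ y) x = -pb f u ψ x := by
  simp [pb, pd_neg', Finset.sum_neg_distrib]

lemma pb_zero' (u : (Fin 4 → ℝ) → ℝ) (x : Fin 4 → ℝ) :
    pb f u (fun _ => (0:ℝ)) x = 0 := by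
  simp [pb, pd_zero']

lemma pb_const_mul' (u : (Fin 4 → ℝ) → ℝ) (c : ℝ) (ψ : (Fin 4 → ℝ) → ℝ) (x : Fin 4 → ℝ)
    (h : DifferentiableAt ℝ ψ x) :
    pb f u (fun y => c * ψ y) x = c * pb f u ψ x := by
  simp only [pb, pd_const_mul' c ψ _ x h, Finset.mul_sum]
  refine Finset.sum_congr rfl fun a _ => Finset.sum_congr rfl fun b _ =>
    Finset.sum_congr rfl fun e _ => by ring

lemma pb_sum' (u : (Fin 4 → ℝ) → ℝ) (h : Fin 4 → (Fin 4 → ℝ) → ℝ) (x : Fin 4 → ℝ)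
    (hd : ∀ i, DifferentiableAt ℝ (h i) x) :
    pb f u (fun y => ∑ i, h i y) x = ∑ i, pb f u (h i) x := by
  simp only [pb, pd_sum' h _ x hd, Finset.mul_sum]
  exact sum_comm4' _

lemma pb_self' (hf1 : ∀ a b c, f a b c = - f b a c) (u : (Fin 4 → ℝ) → ℝ) (x : Fin 4 → ℝ) :
    pb f u u x = 0 := by
  refine sum_antisym' _ fun a b => ?_
  rw [← Finset.sum_neg_distrib]
  exact Finset.sum_congr rfl fun c _ => by rw [hf1]; ring

lemma Dcov_neg' (a : Fin 4) (ψ : (Fin 4 → ℝ) → ℝ) (x : Fin 4 → ℝ) :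
    Dcov f γ ρ A a (fun y => -ψ y) x = -Dcov f γ ρ A a ψ x := by
  simp only [Dcov, pd_neg', pb_neg', mul_neg, ← Finset.sum_neg_distrib]
  refine Finset.sum_congr rfl fun m _ => ?_
  rw [Finset.sum_neg_distrib]
  ring

lemma Dcov_zero' (a : Fin 4) (x : Fin 4 → ℝ) :
    Dcov f γ ρ A a (fun _ => (0:ℝ)) x = 0 := by
  simp [Dcov, pd_zero', pb_zero']

lemma Dcov_sum' (a : Fin 4) (h : Fin 4 → (Fin 4 → ℝ) → ℝ) (x : Fin 4 → ℝ)
    (hd : ∀ i, DifferentiableAt ℝ (h i) x) :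
    Dcov f γ ρ A a (fun y => ∑ i, h i y) x = ∑ i, Dcov f γ ρ A a (h i) x := by
  simp only [Dcov, pd_sum' h _ x hd, pb_sum' f _ h x hd]
  conv_rhs => rw [Finset.sum_comm]
  refine Finset.sum_congr rfl fun m _ => ?_
  rw [← Finset.mul_sum]
  congr 1
  rw [Finset.sum_add_distrib]
  congr 1
  rw [Finset.sum_comm]
  exact Finset.sum_congr rfl fun l _ => by rw [Finset.mul_sum]

lemma contDiff_Dcov' (hγ : ∀ i j, ContDiff ℝ (⊤ : ℕ∞) (fun B => γ B i j))
    (hρ : ∀ i j, ContDiff ℝ (⊤ : ℕ∞) (fun B => ρ B i j)) (hA : ContDiff ℝ (⊤ : ℕ∞) A)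
    (a : Fin 4) (ψ : (Fin 4 → ℝ) → ℝ) (hψ : ContDiff ℝ (⊤ : ℕ∞) ψ) :
    ContDiff ℝ (⊤ : ℕ∞) (Dcov f γ ρ A a ψ) := by
  have hpb : ∀ u : (Fin 4 → ℝ) → ℝ, ContDiff ℝ (⊤ : ℕ∞) u → ContDiff ℝ (⊤ : ℕ∞) (pb f u ψ) := by
    intro u hu
    refine ContDiff.sum fun i _ => ContDiff.sum fun j _ => ContDiff.sum fun c _ => ?_
    exact ((contDiff_const.mul (contDiff_pi.mp contDiff_id c)).mul
      (contDiff_pd' i u hu)).mul (contDiff_pd' j ψ hψ)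
  refine ContDiff.sum fun m _ => ContDiff.mul ((hρ m a).comp hA) (ContDiff.add ?_ ?_)
  · exact ContDiff.sum fun l _ => ((hγ l m).comp hA).mul (contDiff_pd' l ψ hψ)
  · exact hpb _ (contDiff_pi.mp hA m)

lemma Fup_eq' (F : (Fin 4 → ℝ) → Matrix (Fin 4) (Fin 4) ℝ) (a b : Fin 4) (x : Fin 4 → ℝ) :
    Fup F a b x = ηm a a * ηm b b * F x a b := by
  unfold Fup
  rw [Finset.sum_eq_single a]
  · rw [Finset.sum_eq_single b]
    · intro e _ he
      rw [ηm, Matrix.diagonal_apply_ne _ (Ne.symm he)]; ring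
    · intro h; exact absurd (Finset.mem_univ b) h
  · intro c _ hc
    refine Finset.sum_eq_zero fun e _ => ?_
    rw [ηm, Matrix.diagonal_apply_ne _ (Ne.symm hc)]; ring
  · intro h; exact absurd (Finset.mem_univ a) h

end AuxLemmas

theorem stmt12 (f : Fin 4 → Fin 4 → Fin 4 → ℝ) (hf : IsStructureConstants f)
    (γ ρ : (Fin 4 → ℝ) → Matrix (Fin 4) (Fin 4) ℝ)
    (hγ : ∀ i j, ContDiff ℝ (⊤ : ℕ∞) (fun B => γ B i j))
    (hρ : ∀ i j, ContDiff ℝ (⊤ : ℕ∞) (fun B => ρ B i j))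
    (A : (Fin 4 → ℝ) → Fin 4 → ℝ) (hA : ContDiff ℝ (⊤ : ℕ∞) A)
    (F : (Fin 4 → ℝ) → Matrix (Fin 4) (Fin 4) ℝ)
    (hFsm : ∀ a b, ContDiff ℝ (⊤ : ℕ∞) (fun x => F x a b))
    (hFas : ∀ (x : Fin 4 → ℝ) (a b : Fin 4), F x a b = - F x b a)
    (hComm : ∀ ψ : (Fin 4 → ℝ) → ℝ, ContDiff ℝ (⊤ : ℕ∞) ψ →
      ∀ (a b : Fin 4) (x : Fin 4 → ℝ),
        Dcov f γ ρ A a (fun y => Dcov f γ ρ A b ψ y) x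
          - Dcov f γ ρ A b (fun y => Dcov f γ ρ A a ψ y) x
        = pb f (fun y => F y a b) ψ x
          + (∑ d, ∑ e, F x a d * f d e b * Dcov f γ ρ A e ψ x)
          - ∑ d, ∑ e, F x b d * f d e a * Dcov f γ ρ A e ψ x)
    (hNat : ∀ (x : Fin 4 → ℝ) (a : Fin 4),
      ∑ b, Dcov f γ ρ A b (fun y => Fup F b a y) x = 0) :
    ∀ x : Fin 4 → ℝ,
      ∑ a, ∑ b, ∑ d, ∑ e,
        F x a d * f d e b * Dcov f γ ρ A e (fun y => Fup F a b y) x = 0 := by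
  
  intro x
  have hf1 := hf.1
  -- smoothness of the raised field strength
  have hFup_sm : ∀ a b : Fin 4, ContDiff ℝ (⊤ : ℕ∞) (fun y => Fup F a b y) := by
    intro a b
    have h : (fun y => Fup F a b y) = fun y => ηm a a * ηm b b * F y a b :=
      funext fun y => Fup_eq' F a b y
    rw [h]
    exact contDiff_const.mul (hFsm a b)
  -- antisymmetry of Fup, as functions
  have hGanti : ∀ a b : Fin 4, (fun y => Fup F b a y) = fun y => -Fup F a b y := by
    intro a b
    funext y
    rw [Fup_eq' F b a y, Fup_eq' F a b y, hFas y b a]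
    ring
  -- smoothness of covariant derivatives of Fup
  have hDsm : ∀ e a b : Fin 4, ContDiff ℝ (⊤ : ℕ∞) (Dcov f γ ρ A e (fun y => Fup F a b y)) :=
    fun e a b => contDiff_Dcov' f γ ρ A hγ hρ hA e _ (hFup_sm a b)
  -- Step A : ∑_{a,b} D_a D_b F^{ba} = 0
  have stepA : ∑ a, ∑ b, Dcov f γ ρ A a
      (fun y => Dcov f γ ρ A b (fun z => Fup F b a z) y) x = 0 := by
    refine Finset.sum_eq_zero fun a _ => ?_
    have h1 : ∑ b, Dcov f γ ρ A a (fun y => Dcov f γ ρ A b (fun z => Fup F b a z) y) x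
        = Dcov f γ ρ A a (fun y => ∑ b, Dcov f γ ρ A b (fun z => Fup F b a z) y) x :=
      (Dcov_sum' f γ ρ A a _ x
        (fun b => ((hDsm b b a).differentiable (by simp)).differentiableAt)).symm
    have h2 : (fun y => ∑ b, Dcov f γ ρ A b (fun z => Fup F b a z) y) = fun _ => (0:ℝ) :=
      funext fun y => hNat y a
    rw [h1, h2, Dcov_zero']
  -- Step B : ∑_{a,b} D_b D_a F^{ba} = 0
  have stepB : ∑ a, ∑ b, Dcov f γ ρ A b
      (fun y => Dcov f γ ρ A a (fun z => Fup F b a z) y) x = 0 := by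
    rw [Finset.sum_comm]
    refine Finset.sum_eq_zero fun b _ => ?_
    have h1 : ∑ a, Dcov f γ ρ A b (fun y => Dcov f γ ρ A a (fun z => Fup F b a z) y) x
        = Dcov f γ ρ A b (fun y => ∑ a, Dcov f γ ρ A a (fun z => Fup F b a z) y) x :=
      (Dcov_sum' f γ ρ A b _ x
        (fun a => ((hDsm a b a).differentiable (by simp)).differentiableAt)).symm
    have h2 : (fun y => ∑ a, Dcov f γ ρ A a (fun z => Fup F b a z) y) = fun _ => (0:ℝ) := by
      funext y
      have h3 : ∀ a : Fin 4, Dcov f γ ρ A a (fun z => Fup F b a z) y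
          = -Dcov f γ ρ A a (fun z => Fup F a b z) y := by
        intro a
        rw [hGanti a b, Dcov_neg']
      calc ∑ a, Dcov f γ ρ A a (fun z => Fup F b a z) y
          = ∑ a, -Dcov f γ ρ A a (fun z => Fup F a b z) y :=
            Finset.sum_congr rfl fun a _ => h3 a
        _ = -∑ a, Dcov f γ ρ A a (fun z => Fup F a b z) y := Finset.sum_neg_distrib ..
        _ = 0 := by rw [hNat y b, neg_zero]
    rw [h1, h2, Dcov_zero']
  -- the Poisson-bracket terms vanish
  have hPB : ∀ a b : Fin 4, pb f (fun y => F y a b) (fun y => Fup F b a y) x = 0 := by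
    intro a b
    have h1 : (fun y => Fup F b a y) = fun y => (ηm b b * ηm a a) * -F y a b := by
      funext y
      rw [Fup_eq' F b a y, hFas y b a]
    rw [h1, pb_const_mul' f _ (ηm b b * ηm a a) (fun y => -F y a b) x
        (((hFsm a b).neg.differentiable (by simp)).differentiableAt),
      pb_neg' f _ (fun y => F y a b) x, pb_self' f hf1]
    ring
  -- summed commutator identity
  have hCsum : ∑ a, ∑ b,
      (Dcov f γ ρ A a (fun y => Dcov f γ ρ A b (fun z => Fup F b a z) y) x
        - Dcov f γ ρ A b (fun y => Dcov f γ ρ A a (fun z => Fup F b a z) y) x)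
      = ∑ a, ∑ b,
      (pb f (fun y => F y a b) (fun y => Fup F b a y) x
        + (∑ d, ∑ e, F x a d * f d e b * Dcov f γ ρ A e (fun y => Fup F b a y) x)
        - ∑ d, ∑ e, F x b d * f d e a * Dcov f γ ρ A e (fun y => Fup F b a y) x) :=
    Finset.sum_congr rfl fun a _ => Finset.sum_congr rfl fun b _ =>
      hComm (fun y => Fup F b a y) (hFup_sm b a) a b x
  -- left-hand side is zero
  have hL : ∑ a, ∑ b,
      (Dcov f γ ρ A a (fun y => Dcov f γ ρ A b (fun z => Fup F b a z) y) x
        - Dcov f γ ρ A b (fun y => Dcov f γ ρ A a (fun z => Fup F b a z) y) x) = 0 := by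
    calc ∑ a, ∑ b,
        (Dcov f γ ρ A a (fun y => Dcov f γ ρ A b (fun z => Fup F b a z) y) x
          - Dcov f γ ρ A b (fun y => Dcov f γ ρ A a (fun z => Fup F b a z) y) x)
        = (∑ a, ∑ b, Dcov f γ ρ A a (fun y => Dcov f γ ρ A b (fun z => Fup F b a z) y) x)
          - ∑ a, ∑ b, Dcov f γ ρ A b (fun y => Dcov f γ ρ A a (fun z => Fup F b a z) y) x := by
          rw [← Finset.sum_sub_distrib]
          exact Finset.sum_congr rfl fun a _ => Finset.sum_sub_distrib ..
      _ = 0 := by rw [stepA, stepB, sub_zero]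
  -- rewrite each term on the right-hand side
  have hterm : ∀ a b : Fin 4,
      (pb f (fun y => F y a b) (fun y => Fup F b a y) x
        + (∑ d, ∑ e, F x a d * f d e b * Dcov f γ ρ A e (fun y => Fup F b a y) x)
        - ∑ d, ∑ e, F x b d * f d e a * Dcov f γ ρ A e (fun y => Fup F b a y) x)
      = -(∑ d, ∑ e, F x a d * f d e b * Dcov f γ ρ A e (fun y => Fup F a b y) x)
        - ∑ d, ∑ e, F x b d * f d e a * Dcov f γ ρ A e (fun y => Fup F b a y) x := by
    intro a b
    have hDe : ∀ e : Fin 4, Dcov f γ ρ A e (fun y => Fup F b a y) x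
        = -Dcov f γ ρ A e (fun y => Fup F a b y) x := by
      intro e
      rw [hGanti a b, Dcov_neg']
    have h1 : (∑ d, ∑ e, F x a d * f d e b * Dcov f γ ρ A e (fun y => Fup F b a y) x)
        = -(∑ d, ∑ e, F x a d * f d e b * Dcov f γ ρ A e (fun y => Fup F a b y) x) := by
      rw [← Finset.sum_neg_distrib]
      refine Finset.sum_congr rfl fun d _ => ?_
      rw [← Finset.sum_neg_distrib]
      refine Finset.sum_congr rfl fun e _ => ?_
      rw [hDe e]
      ring
    rw [hPB a b, h1]
    ring
  -- assemble
  set S : ℝ := ∑ a, ∑ b, ∑ d, ∑ e,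
      F x a d * f d e b * Dcov f γ ρ A e (fun y => Fup F a b y) x with hS
  have hT2 : ∑ a, ∑ b, ∑ d, ∑ e,
      F x b d * f d e a * Dcov f γ ρ A e (fun y => Fup F b a y) x = S := by
    rw [hS]
    exact Finset.sum_comm
  have hR : ∑ a, ∑ b,
      (pb f (fun y => F y a b) (fun y => Fup F b a y) x
        + (∑ d, ∑ e, F x a d * f d e b * Dcov f γ ρ A e (fun y => Fup F b a y) x)
        - ∑ d, ∑ e, F x b d * f d e a * Dcov f γ ρ A e (fun y => Fup F b a y) x)
      = -S - S := by
    calc ∑ a, ∑ b,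
        (pb f (fun y => F y a b) (fun y => Fup F b a y) x
          + (∑ d, ∑ e, F x a d * f d e b * Dcov f γ ρ A e (fun y => Fup F b a y) x)
          - ∑ d, ∑ e, F x b d * f d e a * Dcov f γ ρ A e (fun y => Fup F b a y) x)
        = ∑ a, ∑ b,
          (-(∑ d, ∑ e, F x a d * f d e b * Dcov f γ ρ A e (fun y => Fup F a b y) x)
            - ∑ d, ∑ e, F x b d * f d e a * Dcov f γ ρ A e (fun y => Fup F b a y) x) :=
          Finset.sum_congr rfl fun a _ => Finset.sum_congr rfl fun b _ => hterm a b
      _ = (∑ a, ∑ b, -(∑ d, ∑ e, F x a d * f d e b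
              * Dcov f γ ρ A e (fun y => Fup F a b y) x))
          - ∑ a, ∑ b, ∑ d, ∑ e, F x b d * f d e a
              * Dcov f γ ρ A e (fun y => Fup F b a y) x := by
          rw [← Finset.sum_sub_distrib]
          exact Finset.sum_congr rfl fun a _ => Finset.sum_sub_distrib ..
      _ = -S - S := by
          rw [hT2]
          congr 1
          rw [← Finset.sum_neg_distrib]
          exact Finset.sum_congr rfl fun a _ => Finset.sum_neg_distrib ..
  have hfin : (0:ℝ) = -S - S := by rw [← hL, hCsum, hR]
  linarith
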